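/- Under unconfoundedness and overlap, the augmented inverse probability weighting identity holds conditionally on Z: E[Y¹ | Z] = E[ T·Y/π*(X) − (T/π*(X) − 1)·m₁*(X) | Z ], where m₁*(X) = E[Y | T=1, X]. -/

import Mathlib

open MeasureTheory ProbabilityTheory Set
open Filter Topology

lemma aux_ae_indepFun {Ω : Type*} (𝓧 : MeasurableSpace Ω) {mΩ : MeasurableSpace Ω}
    [StandardBorelSpace Ω]
    (μ : Measure Ω) [IsProbabilityMeasure μ] (h𝓧 : 𝓧 ≤ mΩ)
    {f g : Ω → ℝ} (hf : Measurable f) (hg : Measurable g)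
    (h : CondIndepFun 𝓧 h𝓧 f g μ) :
    ∀ᵐ ω ∂μ, IndepFun f g (condExpKernel μ 𝓧 ω) := by
  have key : ∀ q r : ℚ, ∀ᵐ ω ∂μ,
      condExpKernel μ 𝓧 ω (f ⁻¹' Iic (q:ℝ) ∩ g ⁻¹' Iic (r:ℝ)) =
        condExpKernel μ 𝓧 ω (f ⁻¹' Iic (q:ℝ)) * condExpKernel μ 𝓧 ω (g ⁻¹' Iic (r:ℝ)) :=
    fun q r => ae_of_ae_trim h𝓧 (h _ _ ⟨Iic (q:ℝ), measurableSet_Iic, rfl⟩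
      ⟨Iic (r:ℝ), measurableSet_Iic, rfl⟩)
  have key' : ∀ᵐ ω ∂μ, ∀ q r : ℚ,
      condExpKernel μ 𝓧 ω (f ⁻¹' Iic (q:ℝ) ∩ g ⁻¹' Iic (r:ℝ)) =
        condExpKernel μ 𝓧 ω (f ⁻¹' Iic (q:ℝ)) * condExpKernel μ 𝓧 ω (g ⁻¹' Iic (r:ℝ)) := by
    rw [ae_all_iff]; intro q; rw [ae_all_iff]; exact key q
  filter_upwards [key'] with ω hω
  have hgen : Real.measurableSpace
      = MeasurableSpace.generateFrom (⋃ q : ℚ, {Iic (q:ℝ)}) :=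
    BorelSpace.measurable_eq.trans Real.borel_eq_generateFrom_Iic_rat
  refine IndepSets.indep (hf.comap_le) (hg.comap_le)
    (Real.isPiSystem_Iic_rat.comap f) (Real.isPiSystem_Iic_rat.comap g) ?_ ?_ ?_
  · rw [hgen, MeasurableSpace.comap_generateFrom]; rfl
  · rw [hgen, MeasurableSpace.comap_generateFrom]; rfl
  · rintro t1 t2 ⟨s1, hs1, rfl⟩ ⟨s2, hs2, rfl⟩
    simp only [mem_iUnion, mem_singleton_iff] at hs1 hs2
    obtain ⟨q, rfl⟩ := hs1
    obtain ⟨r, rfl⟩ := hs2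
    exact Filter.Eventually.of_forall fun _ => hω q r




lemma aux_condexp_mul (𝓧 : MeasurableSpace Ω) {mΩ : MeasurableSpace Ω}
    [StandardBorelSpace Ω]
    (μ : Measure Ω) [IsProbabilityMeasure μ] (h𝓧 : 𝓧 ≤ mΩ)
    {f g : Ω → ℝ} (hf : Measurable f) (hfbd : ∀ ω, |f ω| ≤ 1)
    (hg : Measurable g) (hgint : Integrable g μ)
    (h : CondIndepFun 𝓧 h𝓧 f g μ)
    (hae : ∀ᵐ ω ∂μ, IndepFun f g (condExpKernel μ 𝓧 ω)) :
    μ[fun ω => f ω * g ω|𝓧] =ᵐ[μ] fun ω => (μ[f|𝓧]) ω * (μ[g|𝓧]) ω := by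
  have hfint : Integrable f μ := by
    refine (integrable_const (1:ℝ)).mono' hf.aestronglyMeasurable ?_
    exact Filter.Eventually.of_forall fun ω => by
      simpa [Real.norm_eq_abs] using hfbd ω
  have hfgint : Integrable (fun ω => f ω * g ω) μ :=
    hgint.bdd_mul hf.aestronglyMeasurable (c := 1) (Filter.Eventually.of_forall fun ω => by
      simpa [Real.norm_eq_abs] using hfbd ω)
  have h1 := condExp_ae_eq_integral_condExpKernel h𝓧 hfgint
  have h2 := condExp_ae_eq_integral_condExpKernel h𝓧 hfint
  have h3 := condExp_ae_eq_integral_condExpKernel h𝓧 hgint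
  have h4 : ∀ᵐ ω ∂μ, Integrable f (condExpKernel μ 𝓧 ω) := hfint.condExpKernel_ae
  have h5 : ∀ᵐ ω ∂μ, Integrable g (condExpKernel μ 𝓧 ω) := hgint.condExpKernel_ae
  filter_upwards [h1, h2, h3, h4, h5, hae] with ω e1 e2 e3 i4 i5 ind
  rw [e1, e2, e3]
  have := ind.integral_fun_mul_eq_mul_integral i4.1 i5.1
  simpa [Pi.mul_apply] using this


lemma aux_integrable_div {Ω : Type*} (𝓧 : MeasurableSpace Ω) {mΩ : MeasurableSpace Ω}
    [StandardBorelSpace Ω]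
    (μ : Measure Ω) [IsProbabilityMeasure μ] (h𝓧 : 𝓧 ≤ mΩ)
    {T F : Ω → ℝ} (hT : Measurable T) (hT01 : ∀ ω, T ω = 0 ∨ T ω = 1)
    (hF : Integrable F μ)
    (hpos : ∀ᵐ ω ∂μ, 0 < (μ[T|𝓧]) ω)
    (hcond : μ[(fun ω => T ω * |F ω|)|𝓧] =ᵐ[μ]
      fun ω => (μ[T|𝓧]) ω * (μ[(fun ω => |F ω|)|𝓧]) ω) :
    Integrable (fun ω => T ω / (μ[T|𝓧]) ω * F ω) μ := by
  set π' : Ω → ℝ := μ[T|𝓧] with hπ'def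
  have hπ'sm : StronglyMeasurable[𝓧] π' := stronglyMeasurable_condExp
  have hπ'm : Measurable π' := (hπ'sm.mono h𝓧).measurable
  have hT0 : ∀ ω, 0 ≤ T ω := fun ω => by rcases hT01 ω with h | h <;> simp [h]
  have hT1 : ∀ ω, T ω ≤ 1 := fun ω => by rcases hT01 ω with h | h <;> simp [h]
  have hTF : Integrable (fun ω => T ω * |F ω|) μ :=
    hF.abs.bdd_mul hT.aestronglyMeasurable
      (c := 1) (Filter.Eventually.of_forall fun ω => by rw [Real.norm_eq_abs, abs_of_nonneg (hT0 ω)]; exact hT1 ω)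
  set G : Ω → ℝ := μ[(fun ω => |F ω|)|𝓧] with hGdef
  have hGnn : 0 ≤ᵐ[μ] G := condExp_nonneg (Filter.Eventually.of_forall fun ω => abs_nonneg _)
  set φ : ℕ → Ω → ℝ := fun n ω => max 0 (min ((π' ω)⁻¹) n) with hφdef
  have hφ𝓧sm : ∀ n, StronglyMeasurable[𝓧] (φ n) := fun n =>
    (measurable_const.max (hπ'sm.measurable.inv.min measurable_const)).stronglyMeasurable
  have hφm : ∀ n, Measurable (φ n) := fun n =>
    (measurable_const.max (hπ'm.inv.min measurable_const))
  have hφ0 : ∀ n ω, 0 ≤ φ n ω := fun n ω => le_max_left _ _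
  have hφn : ∀ n ω, φ n ω ≤ n := fun n ω => by
    apply max_le (Nat.cast_nonneg n) (min_le_right _ _)
  have hφint : ∀ n, Integrable (fun ω => φ n ω * (T ω * |F ω|)) μ := fun n =>
    hTF.bdd_mul (hφm n).aestronglyMeasurable
      (c := n) (Filter.Eventually.of_forall fun ω => by rw [Real.norm_eq_abs, abs_of_nonneg (hφ0 n ω)]; exact hφn n ω)
  have hφle : ∀ᵐ ω ∂μ, ∀ n, φ n ω * π' ω ≤ 1 := by
    filter_upwards [hpos] with ω hω n
    have hx : 0 ≤ (π' ω)⁻¹ := le_of_lt (inv_pos.2 hω)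
    have : φ n ω ≤ (π' ω)⁻¹ := max_le hx (min_le_left _ _)
    calc φ n ω * π' ω ≤ (π' ω)⁻¹ * π' ω := by
          exact mul_le_mul_of_nonneg_right this (le_of_lt hω)
      _ = 1 := inv_mul_cancel₀ (ne_of_gt hω)
  have hInt_n : ∀ n, ∫ ω, φ n ω * (T ω * |F ω|) ∂μ ≤ ∫ ω, |F ω| ∂μ := by
    intro n
    have hpull := condExp_mul_of_stronglyMeasurable_left (hφ𝓧sm n) (hφint n) hTF
    have hchain : μ[fun ω => φ n ω * (T ω * |F ω|)|𝓧] =ᵐ[μ]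
        fun ω => φ n ω * (π' ω * G ω) := by
      refine hpull.trans ?_
      filter_upwards [hcond] with ω hω
      simp only [Pi.mul_apply, hω]
    have hint1 : Integrable (fun ω => φ n ω * (π' ω * G ω)) μ :=
      integrable_condExp.congr hchain
    calc ∫ ω, φ n ω * (T ω * |F ω|) ∂μ
        = ∫ ω, (μ[fun ω => φ n ω * (T ω * |F ω|)|𝓧]) ω ∂μ :=
          (integral_condExp h𝓧).symm
      _ = ∫ ω, φ n ω * (π' ω * G ω) ∂μ := integral_congr_ae hchain
      _ ≤ ∫ ω, G ω ∂μ := by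
          refine integral_mono_ae hint1 integrable_condExp ?_
          filter_upwards [hφle, hGnn] with ω h1 h2
          calc φ n ω * (π' ω * G ω) = (φ n ω * π' ω) * G ω := by ring
            _ ≤ 1 * G ω := mul_le_mul_of_nonneg_right (h1 n) h2
            _ = G ω := one_mul _
      _ = ∫ ω, |F ω| ∂μ := integral_condExp h𝓧
  have hAESM : AEStronglyMeasurable (fun ω => T ω / π' ω * F ω) μ :=
    ((hT.div hπ'm).aestronglyMeasurable.mul hF.1)
  refine ⟨hAESM, ?_⟩
  rw [hasFiniteIntegral_iff_norm]
  set u : ℕ → Ω → ENNReal := fun n ω => ENNReal.ofReal (φ n ω * (T ω * |F ω|)) with hudef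
  have hu_meas : ∀ n, AEMeasurable (u n) μ := fun n =>
    ENNReal.measurable_ofReal.comp_aemeasurable (hφint n).1.aemeasurable
  have hu_mono : ∀ᵐ ω ∂μ, Monotone fun n => u n ω := by
    refine Filter.Eventually.of_forall fun ω => monotone_nat_of_le_succ fun n => ?_
    refine ENNReal.ofReal_le_ofReal (mul_le_mul_of_nonneg_right ?_
      (mul_nonneg (hT0 ω) (abs_nonneg _)))
    exact max_le_max le_rfl (min_le_min le_rfl (by exact_mod_cast Nat.le_succ n))
  have hu_tendsto : ∀ᵐ ω ∂μ, Tendsto (fun n => u n ω) atTop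
      (𝓝 (ENNReal.ofReal ‖T ω / π' ω * F ω‖)) := by
    filter_upwards [hpos] with ω hω
    have hx : 0 < (π' ω)⁻¹ := inv_pos.2 hω
    have hev : ∀ᶠ n in atTop, u n ω = ENNReal.ofReal ‖T ω / π' ω * F ω‖ := by
      filter_upwards [eventually_ge_atTop ⌈(π' ω)⁻¹⌉₊] with n hn
      have hxn : (π' ω)⁻¹ ≤ (n : ℝ) :=
        le_trans (Nat.le_ceil _) (by exact_mod_cast hn)
      have hφeq : φ n ω = (π' ω)⁻¹ := by
        rw [hφdef]; simp only
        rw [min_eq_left hxn, max_eq_right hx.le]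
      have hnorm : ‖T ω / π' ω * F ω‖ = (π' ω)⁻¹ * (T ω * |F ω|) := by
        rw [Real.norm_eq_abs, abs_mul, abs_div, abs_of_nonneg (hT0 ω),
          abs_of_pos hω, div_eq_mul_inv]
        ring
      rw [hudef]; simp only
      rw [hφeq, hnorm]
    exact Tendsto.congr' (by filter_upwards [hev] with n h using h.symm) tendsto_const_nhds
  have hlim := lintegral_tendsto_of_tendsto_of_monotone hu_meas hu_mono hu_tendsto
  have hub : ∀ n, ∫⁻ ω, u n ω ∂μ ≤ ENNReal.ofReal (∫ ω, |F ω| ∂μ) := by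
    intro n
    rw [hudef]; simp only
    rw [← ofReal_integral_eq_lintegral_ofReal (hφint n)
      (Filter.Eventually.of_forall fun ω =>
        mul_nonneg (hφ0 n ω) (mul_nonneg (hT0 ω) (abs_nonneg _)))]
    exact ENNReal.ofReal_le_ofReal (hInt_n n)
  have hfin : ∫⁻ ω, ENNReal.ofReal ‖T ω / π' ω * F ω‖ ∂μ
      ≤ ENNReal.ofReal (∫ ω, |F ω| ∂μ) := le_of_tendsto' hlim hub
  exact lt_of_le_of_lt hfin ENNReal.ofReal_lt_top

/-- Under unconfoundedness and overlap, the AIPW identity holds conditionally on Z: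
`E[Y¹ | Z] = E[T·Y/π*(X) − (T/π*(X) − 1)·m₁*(X) | Z]`. -/
theorem cste_aipw_identification
    {Ω : Type*} (𝓧 𝓩 : MeasurableSpace Ω) {mΩ : MeasurableSpace Ω} [StandardBorelSpace Ω]
    (μ : Measure Ω) [IsProbabilityMeasure μ]
    (h𝓩𝓧 : 𝓩 ≤ 𝓧) (h𝓧 : 𝓧 ≤ mΩ)
    (T Y0 Y1 : Ω → ℝ)
    (hT01 : ∀ ω, T ω = 0 ∨ T ω = 1)
    (hTmeas : Measurable T)
    (hY1int : Integrable Y1 μ)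
    -- unconfoundedness: T ⊥ Y¹ | X
    (hUnconf : CondIndepFun 𝓧 h𝓧 T Y1 μ)
    -- propensity score π*(X) = P(T = 1 | X)
    (πs : Ω → ℝ) (hπs : πs =ᵐ[μ] μ[T|𝓧])
    -- overlap
    (hOverlap : ∀ᵐ ω ∂μ, 0 < πs ω ∧ πs ω < 1)
    -- observed outcome
    (Y : Ω → ℝ) (hY : ∀ ω, Y ω = (1 - T ω) * Y0 ω + T ω * Y1 ω)
    -- m₁*(X) = E[Y | T = 1, X], characterized by m₁*·π* = E[T·Y | X]
    (m1 : Ω → ℝ) (hm1meas : StronglyMeasurable[𝓧] m1)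
    (hm1 : (fun ω => m1 ω * πs ω) =ᵐ[μ] μ[fun ω => T ω * Y ω|𝓧]) :
    μ[Y1|𝓩]
      =ᵐ[μ] μ[fun ω => T ω * Y ω / πs ω - (T ω / πs ω - 1) * m1 ω|𝓩] := by
  letI : MeasurableSpace Ω := mΩ
  have hTm : Measurable T := hTmeas
  -- basic facts about T
  have hT0 : ∀ ω, 0 ≤ T ω := fun ω => by rcases hT01 ω with h | h <;> simp [h]
  have hT1 : ∀ ω, T ω ≤ 1 := fun ω => by rcases hT01 ω with h | h <;> simp [h]
  have hTbd : ∀ ω, |T ω| ≤ 1 := fun ω => by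
    rw [abs_of_nonneg (hT0 ω)]; exact hT1 ω
  have hTint : Integrable T μ := by
    refine (integrable_const (1:ℝ)).mono' hTm.aestronglyMeasurable ?_
    exact Eventually.of_forall fun ω => by simpa [Real.norm_eq_abs] using hTbd ω
  -- a measurable version of Y1
  set Y1' : Ω → ℝ := hY1int.1.mk Y1 with hY1'def
  have hY1'sm : StronglyMeasurable Y1' := hY1int.1.stronglyMeasurable_mk
  have hY1'meas : Measurable Y1' := hY1'sm.measurable
  have hmk : Y1 =ᵐ[μ] Y1' := hY1int.1.ae_eq_mk
  have hY1'int : Integrable Y1' μ := hY1int.congr hmk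
  -- conditional independence transfers to Y1'
  have hUnconf' : CondIndepFun 𝓧 h𝓧 T Y1' μ := by
    have hnull0 : μ {ω | Y1 ω ≠ Y1' ω} = 0 := hmk
    have hNmeas : MeasurableSet (toMeasurable μ {ω | Y1 ω ≠ Y1' ω}) :=
      measurableSet_toMeasurable _ _
    have hNnull : μ (toMeasurable μ {ω | Y1 ω ≠ Y1' ω}) = 0 := by
      rw [measure_toMeasurable]; exact hnull0
    have h1 := condExpKernel_ae_eq_trim_condExp (μ := μ) h𝓧 hNmeas
    have h2 : (μ⟦toMeasurable μ {ω | Y1 ω ≠ Y1' ω}|𝓧⟧) =ᵐ[μ] (0 : Ω → ℝ) := by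
      have hind : (toMeasurable μ {ω | Y1 ω ≠ Y1' ω}).indicator (fun _ => (1:ℝ))
          =ᵐ[μ] (0 : Ω → ℝ) := by
        have := measure_eq_zero_iff_ae_notMem.mp hNnull
        filter_upwards [this] with ω hω
        simp [Set.indicator_of_notMem hω]
      exact (condExp_congr_ae hind).trans (by rw [condExp_zero])
    have h2' : (μ⟦toMeasurable μ {ω | Y1 ω ≠ Y1' ω}|𝓧⟧) =ᵐ[μ.trim h𝓧] (0 : Ω → ℝ) := by
      rw [StronglyMeasurable.ae_eq_trim_iff h𝓧 stronglyMeasurable_condExp stronglyMeasurable_zero]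
      exact h2
    have h3 : ∀ᵐ ω ∂(μ.trim h𝓧),
        condExpKernel (mΩ := mΩ) μ 𝓧 ω (toMeasurable μ {ω | Y1 ω ≠ Y1' ω}) = 0 := by
      filter_upwards [h1.trans h2'] with ω hω
      have hfin := measure_ne_top (condExpKernel (mΩ := mΩ) μ 𝓧 ω)
        (toMeasurable μ {ω | Y1 ω ≠ Y1' ω})
      simpa [measureReal_def, ENNReal.toReal_eq_zero_iff, hfin] using hω
    have hg : ∀ᵐ ω ∂(μ.trim h𝓧), Y1 =ᵐ[condExpKernel (mΩ := mΩ) μ 𝓧 ω] Y1' := by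
      filter_upwards [h3] with ω hω
      exact ae_iff.mpr (measure_mono_null (subset_toMeasurable _ _) hω)
    exact Kernel.IndepFun.congr' hUnconf
      (Eventually.of_forall fun ω => Filter.EventuallyEq.rfl) hg
  -- propensity facts
  have hπeq : πs =ᵐ[μ] μ[T|𝓧] := hπs
  have hover : ∀ᵐ ω ∂μ, 0 < (μ[T|𝓧]) ω ∧ (μ[T|𝓧]) ω < 1 := by
    filter_upwards [hOverlap, hπeq] with ω h1 h2
    rw [← h2]; exact h1
  have hpos : ∀ᵐ ω ∂μ, 0 < (μ[T|𝓧]) ω := hover.mono fun ω h => h.1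
  -- product rules
  have haeInd := aux_ae_indepFun (mΩ := mΩ) 𝓧 μ h𝓧 hTm hY1'meas hUnconf'
  have hprod : μ[fun ω => T ω * Y1' ω|𝓧] =ᵐ[μ]
      fun ω => (μ[T|𝓧]) ω * (μ[Y1'|𝓧]) ω :=
    aux_condexp_mul (mΩ := mΩ) 𝓧 μ h𝓧 hTm hTbd hY1'meas hY1'int hUnconf' haeInd
  have hUnconfAbs : CondIndepFun 𝓧 h𝓧 T (fun ω => |Y1' ω|) μ :=
    hUnconf'.comp measurable_id measurable_abs
  have haeIndAbs : ∀ᵐ ω ∂μ, IndepFun T (fun ω => |Y1' ω|)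
      (condExpKernel (mΩ := mΩ) μ 𝓧 ω) :=
    haeInd.mono fun ω h => h.comp measurable_id measurable_abs
  have habs : μ[(fun ω => T ω * |Y1' ω|)|𝓧] =ᵐ[μ]
      fun ω => (μ[T|𝓧]) ω * (μ[(fun ω => |Y1' ω|)|𝓧]) ω :=
    aux_condexp_mul (mΩ := mΩ) 𝓧 μ h𝓧 hTm hTbd hY1'meas.abs hY1'int.abs
      hUnconfAbs haeIndAbs
  -- integrability of the weighted terms
  have hW1int : Integrable (fun ω => T ω / (μ[T|𝓧]) ω * Y1' ω) μ :=
    aux_integrable_div (mΩ := mΩ) 𝓧 μ h𝓧 hTm hT01 hY1'int hpos habs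
  have hMsm : StronglyMeasurable[𝓧] (μ[Y1'|𝓧]) := stronglyMeasurable_condExp
  have hMint : Integrable (μ[Y1'|𝓧]) μ := integrable_condExp
  have hMabs_sm : StronglyMeasurable[𝓧] (fun ω => |(μ[Y1'|𝓧]) ω|) := by
    letI : MeasurableSpace Ω := 𝓧
    exact hMsm.measurable.abs.stronglyMeasurable
  have hTMabs : Integrable (fun ω => T ω * |(μ[Y1'|𝓧]) ω|) μ :=
    hMint.abs.bdd_mul hTm.aestronglyMeasurable
      (c := 1) (Eventually.of_forall fun ω => by rw [Real.norm_eq_abs]; exact hTbd ω)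
  have hMabsT : Integrable (fun ω => |(μ[Y1'|𝓧]) ω| * T ω) μ :=
    hTMabs.congr (Eventually.of_forall fun ω => mul_comm _ _)
  have hcondM : μ[(fun ω => T ω * |(μ[Y1'|𝓧]) ω|)|𝓧] =ᵐ[μ]
      fun ω => (μ[T|𝓧]) ω * (μ[(fun ω => |(μ[Y1'|𝓧]) ω|)|𝓧]) ω := by
    have h1 := condExp_mul_of_stronglyMeasurable_left hMabs_sm hMabsT hTint
    have heq : (fun ω => T ω * |(μ[Y1'|𝓧]) ω|) = (fun ω => |(μ[Y1'|𝓧]) ω|) * T :=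
      funext fun ω => mul_comm _ _
    have h2 : μ[(fun ω => |(μ[Y1'|𝓧]) ω|)|𝓧] = fun ω => |(μ[Y1'|𝓧]) ω| :=
      condExp_of_stronglyMeasurable h𝓧 hMabs_sm hMint.abs
    rw [heq, h2]
    refine h1.trans (Eventually.of_forall fun ω => ?_)
    simp [Pi.mul_apply, mul_comm]
  have hW2int : Integrable (fun ω => T ω / (μ[T|𝓧]) ω * (μ[Y1'|𝓧]) ω) μ :=
    aux_integrable_div (mΩ := mΩ) 𝓧 μ h𝓧 hTm hT01 hMint hpos hcondM
  have hWint : Integrable (fun ω => T ω / (μ[T|𝓧]) ω * (Y1' ω - (μ[Y1'|𝓧]) ω)) μ := by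
    have heq : (fun ω => T ω / (μ[T|𝓧]) ω * (Y1' ω - (μ[Y1'|𝓧]) ω))
        = fun ω => T ω / (μ[T|𝓧]) ω * Y1' ω - T ω / (μ[T|𝓧]) ω * (μ[Y1'|𝓧]) ω :=
      funext fun ω => by ring
    rw [heq]; exact hW1int.sub hW2int
  have hTY : ∀ ω, T ω * Y ω = T ω * Y1 ω := fun ω => by
    rcases hT01 ω with h | h <;> simp [hY ω, h]
  have hTYae : (fun ω => T ω * Y ω) =ᵐ[μ] fun ω => T ω * Y1' ω := by
    filter_upwards [hmk] with ω h
    rw [hTY ω, h]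
  have hcondTY : μ[fun ω => T ω * Y ω|𝓧] =ᵐ[μ]
      fun ω => (μ[T|𝓧]) ω * (μ[Y1'|𝓧]) ω := (condExp_congr_ae hTYae).trans hprod
  have hm1M : m1 =ᵐ[μ] μ[Y1'|𝓧] := by
    filter_upwards [hm1, hcondTY, hπeq, hpos] with ω h1 h2 h3 h4
    have h5 : m1 ω * (μ[T|𝓧]) ω = (μ[Y1'|𝓧]) ω * (μ[T|𝓧]) ω := by
      calc m1 ω * (μ[T|𝓧]) ω = m1 ω * πs ω := by rw [h3]
        _ = (μ[fun ω => T ω * Y ω|𝓧]) ω := h1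
        _ = (μ[T|𝓧]) ω * (μ[Y1'|𝓧]) ω := h2
        _ = (μ[Y1'|𝓧]) ω * (μ[T|𝓧]) ω := mul_comm _ _
    exact mul_right_cancel₀ (ne_of_gt h4) h5
  have hGH : (fun ω => T ω * Y ω / πs ω - (T ω / πs ω - 1) * m1 ω) =ᵐ[μ]
      fun ω => T ω / (μ[T|𝓧]) ω * (Y1' ω - (μ[Y1'|𝓧]) ω) + (μ[Y1'|𝓧]) ω := by
    filter_upwards [hπeq, hm1M, hmk] with ω h1 h2 h3
    rw [h1, h2, hTY ω, h3]
    ring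
  have hTY1'int : Integrable (fun ω => T ω * Y1' ω) μ :=
    hY1'int.bdd_mul hTm.aestronglyMeasurable
      (c := 1) (Eventually.of_forall fun ω => by rw [Real.norm_eq_abs]; exact hTbd ω)
  have hTMint : Integrable (fun ω => T ω * (μ[Y1'|𝓧]) ω) μ :=
    hMint.bdd_mul hTm.aestronglyMeasurable
      (c := 1) (Eventually.of_forall fun ω => by rw [Real.norm_eq_abs]; exact hTbd ω)
  have hTsubint : Integrable (fun ω => T ω * (Y1' ω - (μ[Y1'|𝓧]) ω)) μ := by
    have heq : (fun ω => T ω * (Y1' ω - (μ[Y1'|𝓧]) ω))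
        = fun ω => T ω * Y1' ω - T ω * (μ[Y1'|𝓧]) ω := funext fun ω => by ring
    rw [heq]; exact hTY1'int.sub hTMint
  have hTMcond : μ[(fun ω => T ω * (μ[Y1'|𝓧]) ω)|𝓧] =ᵐ[μ]
      fun ω => (μ[T|𝓧]) ω * (μ[Y1'|𝓧]) ω := by
    have h1 := condExp_mul_of_stronglyMeasurable_left hMsm
      (hTMint.congr (Eventually.of_forall fun ω => mul_comm _ _)) hTint
    have heq : (fun ω => T ω * (μ[Y1'|𝓧]) ω) = (μ[Y1'|𝓧]) * T :=
      funext fun ω => mul_comm _ _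
    rw [heq]
    refine h1.trans (Eventually.of_forall fun ω => ?_)
    simp [Pi.mul_apply, mul_comm]
  have hsubcond : μ[(fun ω => T ω * (Y1' ω - (μ[Y1'|𝓧]) ω))|𝓧] =ᵐ[μ] (0 : Ω → ℝ) := by
    have heq : (fun ω => T ω * (Y1' ω - (μ[Y1'|𝓧]) ω))
        = (fun ω => T ω * Y1' ω) - fun ω => T ω * (μ[Y1'|𝓧]) ω := funext fun ω => by
          simp only [Pi.sub_apply]; ring
    rw [heq]
    refine (condExp_sub hTY1'int hTMint _).trans ?_
    filter_upwards [hprod, hTMcond] with ω e1 e2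
    simp [Pi.sub_apply, e1, e2]
  have hcondW𝓧 : μ[(fun ω => T ω / (μ[T|𝓧]) ω * (Y1' ω - (μ[Y1'|𝓧]) ω))|𝓧]
      =ᵐ[μ] (0 : Ω → ℝ) := by
    have hinv_sm : StronglyMeasurable[𝓧] (fun ω => ((μ[T|𝓧]) ω)⁻¹) := by
      letI : MeasurableSpace Ω := 𝓧
      exact (stronglyMeasurable_condExp (m := 𝓧)).measurable.inv.stronglyMeasurable
    have hrw : (fun ω => T ω / (μ[T|𝓧]) ω * (Y1' ω - (μ[Y1'|𝓧]) ω))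
        = (fun ω => ((μ[T|𝓧]) ω)⁻¹) * fun ω => T ω * (Y1' ω - (μ[Y1'|𝓧]) ω) :=
      funext fun ω => by simp only [Pi.mul_apply]; ring
    have hpull := condExp_mul_of_stronglyMeasurable_left hinv_sm (by rw [← hrw]; exact hWint) hTsubint
    rw [hrw]
    refine hpull.trans ?_
    filter_upwards [hsubcond] with ω e
    simp [Pi.mul_apply, e]
  have hcondW𝓩 : μ[(fun ω => T ω / (μ[T|𝓧]) ω * (Y1' ω - (μ[Y1'|𝓧]) ω))|𝓩]
      =ᵐ[μ] (0 : Ω → ℝ) := by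
    refine (condExp_condExp_of_le h𝓩𝓧 h𝓧).symm.trans
      ((condExp_congr_ae hcondW𝓧).trans ?_)
    rw [condExp_zero]
  have hH : μ[(fun ω => T ω / (μ[T|𝓧]) ω * (Y1' ω - (μ[Y1'|𝓧]) ω) + (μ[Y1'|𝓧]) ω)|𝓩]
      =ᵐ[μ] μ[Y1|𝓩] := by
    have hsplit : (fun ω => T ω / (μ[T|𝓧]) ω * (Y1' ω - (μ[Y1'|𝓧]) ω) + (μ[Y1'|𝓧]) ω)
        = (fun ω => T ω / (μ[T|𝓧]) ω * (Y1' ω - (μ[Y1'|𝓧]) ω)) + μ[Y1'|𝓧] :=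
      funext fun ω => rfl
    rw [hsplit]
    refine (condExp_add hWint hMint _).trans ?_
    have h6 : μ[μ[Y1'|𝓧]|𝓩] =ᵐ[μ] μ[Y1|𝓩] :=
      (condExp_condExp_of_le h𝓩𝓧 h𝓧).trans (condExp_congr_ae hmk.symm)
    filter_upwards [hcondW𝓩, h6] with ω e1 e2
    simp [Pi.add_apply, e1, e2]
  exact ((condExp_congr_ae hGH).trans hH).symm
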